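/- For every integer k and every integer n ≥ 0, the poly-Cauchy polynomial of the first kind expands in rising factorials as C_n^(k)(x) = Σ_{m=0}^{n} (-1)^m C(n,m) C_{n-m}^{(k)} x^{(m)}, where x^{(m)} = x(x+1)⋯(x+m-1) is the rising factorial. -/

import Mathlib

open PowerSeries Finset

/-- Composition `F(G(t))` of formal power series (intended for `G` with zero
constant term, in which case `coeff n (G ^ m) = 0` for `m > n` and the finite
sum below computes the usual composition). -/
noncomputable def psComp (F G : PowerSeries ℝ) : PowerSeries ℝ :=
  PowerSeries.mk fun n => ∑ m ∈ Finset.range (n + 1),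
    (PowerSeries.coeff m F) * (PowerSeries.coeff n (G ^ m))

/-- The formal power series of `log (1 + t)`. -/
noncomputable def logSeries : PowerSeries ℝ :=
  PowerSeries.mk fun n => if n = 0 then 0 else (-1) ^ (n + 1) / n

/-- The polylogarithm factorial function `Lif_k(t) = ∑_{m ≥ 0} t^m / (m! (m+1)^k)`. -/
noncomputable def Lif (k : ℤ) : PowerSeries ℝ :=
  PowerSeries.mk fun m => 1 / ((m.factorial : ℝ) * ((m : ℝ) + 1) ^ k)

/-- The poly-Cauchy polynomial of the first kind `C_n^{(k)}(x)`, defined by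
`Lif_k(log(1+t)) / (1+t)^x = ∑_{n ≥ 0} C_n^{(k)}(x) t^n / n!`, where
`(1+t)^{-x} = exp (-x · log (1+t))`. -/
noncomputable def polyCauchy (k : ℤ) (n : ℕ) (x : ℝ) : ℝ :=
  (n.factorial : ℝ) * PowerSeries.coeff n
    (psComp (Lif k) logSeries *
      psComp (PowerSeries.rescale (-x) (PowerSeries.exp ℝ)) logSeries)

/-- The (signed) Stirling numbers of the first kind `S₁(l, m)`, defined by
`(log (1+t))^m = m! ∑_{l ≥ m} S₁(l,m) t^l / l!`. -/
noncomputable def S1 (l m : ℕ) : ℝ :=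
  (l.factorial : ℝ) / (m.factorial : ℝ) * PowerSeries.coeff l (logSeries ^ m)

/-- The ordinary Bernoulli numbers, via `t/(e^t - 1) = ∑ B_n t^n/n!`;
here `(mk fun m => 1/(m+1)!)` is the series `(e^t - 1)/t`. -/
noncomputable def Bern (n : ℕ) : ℝ :=
  (n.factorial : ℝ) * PowerSeries.coeff n
    (PowerSeries.mk fun m => (1 : ℝ) / (m + 1).factorial)⁻¹

/-- The Bernoulli polynomial of order `r`, via `(t/(e^t-1))^r e^{xt} = ∑ B_n^{(r)}(x) t^n/n!`. -/
noncomputable def bernPoly (r : ℕ) (n : ℕ) (x : ℝ) : ℝ :=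
  (n.factorial : ℝ) * PowerSeries.coeff n
    (((PowerSeries.mk fun m => (1 : ℝ) / (m + 1).factorial)⁻¹) ^ r *
      PowerSeries.rescale x (PowerSeries.exp ℝ))

/-- The series `log(1+t)/t`, so that `t / log(1+t) = Dlog⁻¹`. -/
noncomputable def Dlog : PowerSeries ℝ :=
  PowerSeries.mk fun n => (-1) ^ n / ((n : ℝ) + 1)

/-- The Cauchy numbers of the first kind, via `t/log(1+t) = ∑ C_n t^n/n!`. -/
noncomputable def cauchyNum (n : ℕ) : ℝ :=
  (n.factorial : ℝ) * PowerSeries.coeff n Dlog⁻¹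

/-- The numbers `T_n^{(r,k)}`, via
`(t/log(1+t))^r · Lif_k(log(1+t)) = ∑ T_n^{(r,k)} t^n/n!`. -/
noncomputable def T (r : ℕ) (k : ℤ) (n : ℕ) : ℝ :=
  (n.factorial : ℝ) * PowerSeries.coeff n (Dlog⁻¹ ^ r * psComp (Lif k) logSeries)

/-- The rising factorial `x^{(m)} = x (x+1) ⋯ (x+m-1)`. -/
noncomputable def risingFactorial (x : ℝ) (m : ℕ) : ℝ :=
  ∏ i ∈ Finset.range m, (x + i)

/-- Carlitz's polynomials `β_n^{(r)}(x)`, via `(t/log(1+t))^r (1+t)^x = ∑ β_n^{(r)}(x) t^n/n!`,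
where `(1+t)^x = exp (x log (1+t))`. -/
noncomputable def carlitz (r : ℕ) (n : ℕ) (x : ℝ) : ℝ :=
  (n.factorial : ℝ) * PowerSeries.coeff n
    (Dlog⁻¹ ^ r * psComp (PowerSeries.rescale x (PowerSeries.exp ℝ)) logSeries)

/-! The generating function of `C_n^{(k)}(x)` is that of `C_n^{(k)}` times
`(1+t)^{-x} = exp(-x log(1+t))`, so the theorem is the binomial convolution of the two sequences
once we know `m! [t^m] (1+t)^y = y (y-1) ⋯ (y-m+1)`. That coefficient formula follows from the
differential equation `(1+t) f' = y f`, which the chain rule derives from `(1+t) log'(1+t) = 1`. -/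

theorem coeff_pow_eq_zero_of_lt {R : Type*} [CommSemiring R] {G : PowerSeries R}
    (hG : constantCoeff G = 0) {n m : ℕ} (hnm : n < m) : coeff n (G ^ m) = 0 :=
  X_pow_dvd_iff.mp (pow_dvd_pow_of_dvd (X_dvd_iff.mpr hG) m) n hnm

theorem psComp_eq_subst (F : PowerSeries ℝ) {G : PowerSeries ℝ} (hG : constantCoeff G = 0) :
    psComp F G = F.subst G := by
  ext n
  rw [coeff_subst' (HasSubst.of_constantCoeff_zero' hG), psComp, coeff_mk,
    finsum_eq_sum_of_support_subset _ (s := range (n + 1))]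
  · rfl
  · intro m hm
    by_contra h
    simp only [coe_range, Set.mem_Iio, not_lt] at h
    exact hm (by simp [coeff_pow_eq_zero_of_lt hG (Nat.lt_of_succ_le h)])

theorem derivative_rescale_exp {A : Type*} [CommRing A] [Algebra ℚ A] (a : A) :
    d⁄dX A (rescale a (exp A)) = a • rescale a (exp A) := by
  ext n
  have hfac : ((n + 1).factorial : ℚ) = (n + 1) * n.factorial := by
    push_cast [Nat.factorial_succ]; ring
  have hrat : 1 / ((n + 1).factorial : ℚ) * ((n + 1 : ℕ) : ℚ) = 1 / n.factorial := by
    rw [hfac]; field_simp; push_cast; ring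
  rw [coeff_derivative, coeff_rescale, coeff_exp, coeff_smul, coeff_rescale, coeff_exp,
    smul_eq_mul, ← hrat, map_mul, map_natCast]
  push_cast
  ring

theorem constantCoeff_logSeries : constantCoeff logSeries = 0 := by
  simp [logSeries]

theorem derivative_logSeries : d⁄dX ℝ logSeries = mk fun n => (-1) ^ n := by
  ext n
  simp only [logSeries, coeff_derivative, coeff_mk, Nat.add_eq_zero_iff, one_ne_zero, and_false,
    if_false, pow_succ, Nat.cast_add, Nat.cast_one]
  field_simp

theorem one_add_X_mul_derivative_logSeries : (1 + X) * d⁄dX ℝ logSeries = 1 := by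
  ext n
  rcases n with _ | n
  · simp [derivative_logSeries]
  · simp [derivative_logSeries, add_mul, coeff_succ_X_mul, pow_succ]

noncomputable def oneAddXRpow (y : ℝ) : PowerSeries ℝ :=
  psComp (rescale y (exp ℝ)) logSeries

theorem one_add_X_mul_derivative_oneAddXRpow (y : ℝ) :
    (1 + X) * d⁄dX ℝ (oneAddXRpow y) = y • oneAddXRpow y := by
  have hL := HasSubst.of_constantCoeff_zero' constantCoeff_logSeries
  rw [oneAddXRpow, psComp_eq_subst _ constantCoeff_logSeries, derivative_subst hL,
    derivative_rescale_exp, subst_smul hL, mul_left_comm, one_add_X_mul_derivative_logSeries,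
    mul_one]

theorem succ_mul_coeff_succ_oneAddXRpow (y : ℝ) (n : ℕ) :
    (n + 1) * coeff (n + 1) (oneAddXRpow y) = (y - n) * coeff n (oneAddXRpow y) := by
  have h := congrArg (coeff n) (one_add_X_mul_derivative_oneAddXRpow y)
  rw [add_mul, one_mul, map_add, coeff_derivative, coeff_smul, smul_eq_mul] at h
  rcases n with _ | n
  · simp only [coeff_zero_X_mul] at h
    norm_num at h ⊢
    linarith
  · rw [coeff_succ_X_mul, coeff_derivative] at h
    push_cast at h ⊢
    linarith

theorem constantCoeff_oneAddXRpow (y : ℝ) : constantCoeff (oneAddXRpow y) = 1 := by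
  simp [oneAddXRpow, psComp]

theorem factorial_mul_coeff_oneAddXRpow (y : ℝ) (n : ℕ) :
    n.factorial * coeff n (oneAddXRpow y) = (descPochhammer ℝ n).eval y := by
  induction n with
  | zero => simp [constantCoeff_oneAddXRpow]
  | succ n ih =>
    rw [descPochhammer_succ_eval, ← ih, Nat.factorial_succ]
    push_cast
    linear_combination (n.factorial : ℝ) * succ_mul_coeff_succ_oneAddXRpow y n

theorem descPochhammer_eval_neg_eq_risingFactorial (x : ℝ) (m : ℕ) :
    (descPochhammer ℝ m).eval (-x) = (-1) ^ m * risingFactorial x m := by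
  have h := prod_neg (s := range m) fun i : ℕ => x + i
  rw [card_range] at h
  rw [descPochhammer_eval_eq_prod_range, risingFactorial, ← h]
  exact prod_congr rfl fun i _ => by ring

theorem oneAddXRpow_zero : oneAddXRpow 0 = 1 := by
  have hL := HasSubst.of_constantCoeff_zero' constantCoeff_logSeries
  rw [oneAddXRpow, rescale_zero, RingHom.comp_apply, constantCoeff_exp, map_one,
    psComp_eq_subst _ constantCoeff_logSeries, ← coe_substAlgHom hL, map_one]

theorem polyCauchy_eq_factorial_mul_coeff (k : ℤ) (n : ℕ) (x : ℝ) :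
    polyCauchy k n x = n.factorial * coeff n (psComp (Lif k) logSeries * oneAddXRpow (-x)) := rfl

/-- Theorem 10 of the paper. -/
theorem polyCauchy_eq_risingFactorial_expansion (k : ℤ) (n : ℕ) (x : ℝ) :
    polyCauchy k n x =
      ∑ m ∈ Finset.range (n + 1),
        (-1 : ℝ) ^ m * (n.choose m : ℝ) * polyCauchy k (n - m) 0 *
          risingFactorial x m := by
  have hzero (j : ℕ) : polyCauchy k j 0 = j.factorial * coeff j (psComp (Lif k) logSeries) := by
    rw [polyCauchy_eq_factorial_mul_coeff, neg_zero, oneAddXRpow_zero, mul_one]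
  rw [polyCauchy_eq_factorial_mul_coeff, mul_comm (psComp _ _), coeff_mul,
    Nat.sum_antidiagonal_eq_sum_range_succ_mk, mul_sum]
  refine sum_congr rfl fun m hm => ?_
  have hrise : (m.factorial : ℝ) * coeff m (oneAddXRpow (-x)) = (-1) ^ m * risingFactorial x m := by
    rw [factorial_mul_coeff_oneAddXRpow, descPochhammer_eval_neg_eq_risingFactorial]
  rw [hzero, ← Nat.choose_mul_factorial_mul_factorial (Nat.lt_succ_iff.mp (mem_range.mp hm))]
  push_cast
  linear_combination
    (n.choose m : ℝ) * (n - m).factorial * coeff (n - m) (psComp (Lif k) logSeries) * hrise
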